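/- arXiv:1011.5133 — 3 statements merged into one kernel-verified Lean document; each statement's English description precedes it below -/
import Mathlib

section
/- Let H be an RKHS with kernel bounded by κ (i.e. sup_x sqrt(k(x,x)) ≤ κ). Given training data (x₁,y₁),…,(xₙ,yₙ) with squared losses bounded by M (i.e. (y − φ(x))² ≤ M for the relevant minimizers), let φ_D minimize A(φ) = (1/n)Σᵢ(yᵢ − φ(xᵢ))² + λ‖φ‖²_H over H, and let φ_{D^i} minimize the analogous functional A^i(φ) = (1/(n−1))Σ_{j≠i}(y_j − φ(x_j))² + λ‖φ‖²_H obtained by deleting the i-th example. Then ‖φ_{D^i} − φ_D‖_H ≤ 2(n−1)√M·κ/(nλ), and consequently for every (x,y), |(φ_D(x) − y)² − (φ_{D^i}(x) − y)²| ≤ 4Mκ²/(nλ). -/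
open RealInnerProductSpace Finset

section Helpers

open Filter Topology

variable {H : Type*} [NormedAddCommGroup H] [InnerProductSpace ℝ H]

/-- Strong convexity at the minimizer of `L + lam‖·‖²` for convex `L`. -/
lemma strong_min (lam : ℝ) (hlam : 0 < lam) (L : H → ℝ)
    (hL : ConvexOn ℝ Set.univ L) (φs : H)
    (hmin : IsMinOn (fun φ => L φ + lam * ‖φ‖ ^ 2) Set.univ φs) (ψ : H) :
    L φs + lam * ‖φs‖ ^ 2 + lam * ‖ψ - φs‖ ^ 2 ≤ L ψ + lam * ‖ψ‖ ^ 2 := by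
  have key : ∀ t ∈ Set.Ioo (0:ℝ) 1,
      lam * (1 - t) * ‖ψ - φs‖ ^ 2 ≤ (L ψ + lam * ‖ψ‖ ^ 2) - (L φs + lam * ‖φs‖ ^ 2) := by
    intro t ht
    set φt := (1 - t) • φs + t • ψ with hφt
    have hconv := hL.2 (Set.mem_univ φs) (Set.mem_univ ψ)
      (by linarith [ht.2] : (0:ℝ) ≤ 1 - t) ht.1.le (by ring)
    have hnorm : ‖φt‖ ^ 2 = (1 - t) * ‖φs‖ ^ 2 + t * ‖ψ‖ ^ 2 - t * (1 - t) * ‖ψ - φs‖ ^ 2 := by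
      have e : ∀ u : H, ‖u‖ ^ 2 = ⟪u, u⟫ := fun u => (real_inner_self_eq_norm_sq u).symm
      simp only [e, hφt, inner_add_left, inner_add_right, inner_sub_left, inner_sub_right,
        real_inner_smul_left, real_inner_smul_right, real_inner_comm ψ φs]
      ring
    have hmin' := isMinOn_iff.mp hmin φt (Set.mem_univ _)
    simp only [smul_eq_mul] at hmin' hconv
    rw [hnorm] at hmin'
    rw [← hφt] at hconv
    nlinarith [ht.1, ht.2, mul_pos ht.1 hlam, hmin', hconv]
  have htend : Tendsto (fun t : ℝ => lam * (1 - t) * ‖ψ - φs‖ ^ 2) (𝓝[>] (0:ℝ))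
      (𝓝 (lam * ‖ψ - φs‖ ^ 2)) := by
    have : ContinuousAt (fun t : ℝ => lam * (1 - t) * ‖ψ - φs‖ ^ 2) 0 := by
      fun_prop
    have := this.tendsto
    simp only [sub_zero, mul_one] at this
    exact this.mono_left nhdsWithin_le_nhds
  have hineq := le_of_tendsto htend
    (by
      filter_upwards [Ioo_mem_nhdsGT_of_mem (by norm_num : (0:ℝ) ∈ Set.Ico (0:ℝ) 1)] with t ht
      exact key t ht)
  linarith

lemma convex_loss_sum {X : Type*} {n : ℕ} (K : X → H) (x : Fin n → X) (y : Fin n → ℝ)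
    (s : Finset (Fin n)) :
    ConvexOn ℝ Set.univ (fun φ : H => ∑ j ∈ s, (y j - ⟪φ, K (x j)⟫) ^ 2) := by
  refine ⟨convex_univ, fun a _ b _ p q hp hq hpq => ?_⟩
  simp only [smul_eq_mul]
  rw [Finset.mul_sum, Finset.mul_sum, ← Finset.sum_add_distrib]
  refine Finset.sum_le_sum fun j _ => ?_
  rw [inner_add_left, real_inner_smul_left, real_inner_smul_left]
  obtain rfl : q = 1 - p := by linarith
  nlinarith [mul_nonneg (mul_nonneg hp hq) (sq_nonneg (⟪a, K (x j)⟫ - ⟪b, K (x j)⟫))]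

lemma sq_diff_bound (a b s d : ℝ) (ha : |a| ≤ s) (hb : |b| ≤ s) (hd : |a - b| ≤ d) :
    |a ^ 2 - b ^ 2| ≤ 2 * s * d := by
  have h1 : a ^ 2 - b ^ 2 = (a + b) * (a - b) := by ring
  rw [h1, abs_mul]
  have h2 : |a + b| ≤ 2 * s := by
    have := abs_add_le a b
    linarith
  have hs : 0 ≤ s := le_trans (abs_nonneg a) ha
  have h0 : 0 ≤ |a - b| := abs_nonneg _
  nlinarith [abs_nonneg (a + b)]


end Helpers

set_option maxHeartbeats 1000000

/-- Uniform stability of regularization networks (Bousquet–Elisseeff): if `φD` minimizes the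
regularized empirical risk on the full sample and `φDi` minimizes the leave-one-out risk,
with kernel bounded by `κ` and squared losses bounded by `M`, then
`‖φDi − φD‖ ≤ 2(n−1)√M κ/(nλ)`, and the squared losses of the two predictors differ by
at most `4Mκ²/(nλ)` at every point. -/
theorem stmt_3
    {X : Type*} {H : Type*} [NormedAddCommGroup H] [InnerProductSpace ℝ H]
    (ev : H → X → ℝ) (K : X → H)
    (hrepr : ∀ (f : H) (x : X), ev f x = ⟪f, K x⟫)
    (κ : ℝ) (hκ : ∀ x : X, Real.sqrt ⟪K x, K x⟫ ≤ κ)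
    (n : ℕ) (hn : 2 ≤ n)
    (x : Fin n → X) (y : Fin n → ℝ) (i : Fin n)
    (lam M : ℝ) (hlam : 0 < lam) (hM : 0 < M)
    (φD φDi : H)
    (hφD : IsMinOn
      (fun φ : H => (1 / (n : ℝ)) * ∑ j, (y j - ev φ (x j)) ^ 2 + lam * ‖φ‖ ^ 2)
      Set.univ φD)
    (hφDi : IsMinOn
      (fun φ : H => (1 / ((n : ℝ) - 1)) * ∑ j ∈ Finset.univ.erase i, (y j - ev φ (x j)) ^ 2
          + lam * ‖φ‖ ^ 2)
      Set.univ φDi)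
    (hlossD : ∀ j, (y j - ev φD (x j)) ^ 2 ≤ M)
    (hlossDi : ∀ j, (y j - ev φDi (x j)) ^ 2 ≤ M) :
    ‖φDi - φD‖ ≤ 2 * ((n : ℝ) - 1) * Real.sqrt M * κ / (n * lam) ∧
    ∀ (x₀ : X) (y₀ : ℝ),
      (ev φD x₀ - y₀) ^ 2 ≤ M → (ev φDi x₀ - y₀) ^ 2 ≤ M →
      |(ev φD x₀ - y₀) ^ 2 - (ev φDi x₀ - y₀) ^ 2| ≤ 4 * M * κ ^ 2 / (n * lam) := by
  -- basic positivity facts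
  have hN2 : (2:ℝ) ≤ (n:ℝ) := by exact_mod_cast hn
  set N : ℝ := (n:ℝ) with hNdef
  have hN0 : (0:ℝ) < N := by linarith
  have hN1 : (1:ℝ) ≤ N - 1 := by linarith
  have hN1' : (0:ℝ) < N - 1 := by linarith
  have hKnorm : ∀ x0 : X, ‖K x0‖ ≤ κ := by
    intro x0
    have h := hκ x0
    rwa [real_inner_self_eq_norm_sq, Real.sqrt_sq (norm_nonneg _)] at h
  have hκ0 : (0:ℝ) ≤ κ := le_trans (norm_nonneg _) (hKnorm (x i))
  have hsM : (0:ℝ) ≤ Real.sqrt M := Real.sqrt_nonneg M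
  set Δ : H := φDi - φD with hΔdef
  set B : ℝ := 2 * Real.sqrt M * κ * ‖Δ‖ with hBdef
  have hB0 : 0 ≤ B := by positivity
  -- abbreviations for losses
  set d : Fin n → ℝ := fun j => (y j - ev φDi (x j)) ^ 2 - (y j - ev φD (x j)) ^ 2 with hddef
  -- pointwise bound
  have habs : ∀ (φ : H) (j : Fin n), (y j - ev φ (x j)) ^ 2 ≤ M → |y j - ev φ (x j)| ≤ Real.sqrt M := by
    intro φ j h
    have := Real.sqrt_le_sqrt h
    rwa [Real.sqrt_sq_eq_abs] at this
  have hevdiff : ∀ x0 : X, |ev φDi x0 - ev φD x0| ≤ κ * ‖Δ‖ := by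
    intro x0
    have h1 : ev φDi x0 - ev φD x0 = ⟪Δ, K x0⟫ := by
      rw [hrepr, hrepr, hΔdef, inner_sub_left]
    rw [h1]
    calc |⟪Δ, K x0⟫| ≤ ‖Δ‖ * ‖K x0‖ := abs_real_inner_le_norm Δ (K x0)
      _ ≤ ‖Δ‖ * κ := by
          exact mul_le_mul_of_nonneg_left (hKnorm x0) (norm_nonneg Δ)
      _ = κ * ‖Δ‖ := by ring
  have hd : ∀ j, |d j| ≤ B := by
    intro j
    have ha := habs φDi j (hlossDi j)
    have hb := habs φD j (hlossD j)
    have hsub : |(y j - ev φDi (x j)) - (y j - ev φD (x j))| ≤ κ * ‖Δ‖ := by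
      have : (y j - ev φDi (x j)) - (y j - ev φD (x j)) = -(ev φDi (x j) - ev φD (x j)) := by ring
      rw [this, abs_neg]
      exact hevdiff (x j)
    have h := sq_diff_bound _ _ _ _ ha hb hsub
    have hEB : 2 * Real.sqrt M * (κ * ‖Δ‖) = B := by rw [hBdef]; ring
    simp only [hddef]
    linarith
  -- convexity and strong minimality
  have hconv1 : ConvexOn ℝ Set.univ
      (fun φ : H => (1 / N) * ∑ j, (y j - ⟪φ, K (x j)⟫) ^ 2) := by
    simpa [smul_eq_mul] using
      (convex_loss_sum K x y Finset.univ).smul (by positivity : (0:ℝ) ≤ 1 / N)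
  have hconv2 : ConvexOn ℝ Set.univ
      (fun φ : H => (1 / (N - 1)) * ∑ j ∈ Finset.univ.erase i, (y j - ⟪φ, K (x j)⟫) ^ 2) := by
    simpa [smul_eq_mul] using
      (convex_loss_sum K x y (Finset.univ.erase i)).smul (by positivity : (0:ℝ) ≤ 1 / (N - 1))
  have hφD' : IsMinOn
      (fun φ : H => (1 / N) * ∑ j, (y j - ⟪φ, K (x j)⟫) ^ 2 + lam * ‖φ‖ ^ 2)
      Set.univ φD := by
    have hfun : (fun φ : H => (1 / N) * ∑ j, (y j - ev φ (x j)) ^ 2 + lam * ‖φ‖ ^ 2)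
        = (fun φ : H => (1 / N) * ∑ j, (y j - ⟪φ, K (x j)⟫) ^ 2 + lam * ‖φ‖ ^ 2) := by
      funext φ; simp only [hrepr]
    rw [← hfun]; exact hφD
  have hφDi' : IsMinOn
      (fun φ : H => (1 / (N - 1)) * ∑ j ∈ Finset.univ.erase i, (y j - ⟪φ, K (x j)⟫) ^ 2
        + lam * ‖φ‖ ^ 2) Set.univ φDi := by
    have hfun : (fun φ : H => (1 / (N - 1)) * ∑ j ∈ Finset.univ.erase i, (y j - ev φ (x j)) ^ 2
          + lam * ‖φ‖ ^ 2)
        = (fun φ : H => (1 / (N - 1)) * ∑ j ∈ Finset.univ.erase i, (y j - ⟪φ, K (x j)⟫) ^ 2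
          + lam * ‖φ‖ ^ 2) := by
      funext φ; simp only [hrepr]
    rw [← hfun]; exact hφDi
  have S1 := strong_min lam hlam _ hconv1 φD hφD' φDi
  have S2 := strong_min lam hlam _ hconv2 φDi hφDi' φD
  simp only [← hrepr] at S1 S2
  rw [norm_sub_rev φD φDi] at S2
  -- the key inequality
  have hsum1 : (1 / N) * ∑ j, (y j - ev φDi (x j)) ^ 2
      - (1 / N) * ∑ j, (y j - ev φD (x j)) ^ 2 = (1 / N) * ∑ j, d j := by
    rw [Finset.sum_sub_distrib]; ring
  have hsum2 : (1 / (N - 1)) * ∑ j ∈ Finset.univ.erase i, (y j - ev φD (x j)) ^ 2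
      - (1 / (N - 1)) * ∑ j ∈ Finset.univ.erase i, (y j - ev φDi (x j)) ^ 2
      = -((1 / (N - 1)) * ∑ j ∈ Finset.univ.erase i, d j) := by
    rw [Finset.sum_sub_distrib]; ring
  set S : ℝ := ∑ j ∈ Finset.univ.erase i, d j with hSdef
  have hsplit : ∑ j, d j = S + d i := by
    rw [hSdef, Finset.sum_erase_add Finset.univ d (Finset.mem_univ i)]
  have hScard : |S| ≤ (N - 1) * B := by
    calc |S| ≤ ∑ j ∈ Finset.univ.erase i, |d j| := Finset.abs_sum_le_sum_abs _ _
      _ ≤ (Finset.univ.erase i).card • B := Finset.sum_le_card_nsmul _ _ B (fun j _ => hd j)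
      _ = ((Finset.univ.erase i).card : ℝ) * B := by rw [nsmul_eq_mul]
      _ = (N - 1) * B := by
          rw [Finset.card_erase_of_mem (Finset.mem_univ i), Finset.card_univ, Fintype.card_fin]
          congr 1
          push_cast [Nat.cast_sub (by omega : 1 ≤ n)]
          ring
  have key : 2 * lam * ‖Δ‖ ^ 2 ≤ (1 / N) * (S + d i) - (1 / (N - 1)) * S := by
    have h := add_le_add S1 S2
    rw [← hsplit]
    nlinarith [h]
  have hmid : (1 / N) * (S + d i) - (1 / (N - 1)) * S
      ≤ (1 / N) * B + (1 / (N - 1) - 1 / N) * ((N - 1) * B) := by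
    have h1 : (1 / N) * d i ≤ (1 / N) * B :=
      mul_le_mul_of_nonneg_left (le_trans (le_abs_self _) (hd i)) (by positivity)
    have h2 : (1 / N - 1 / (N - 1)) * S ≤ (1 / (N - 1) - 1 / N) * ((N - 1) * B) := by
      have hc : (0:ℝ) ≤ 1 / (N - 1) - 1 / N := by
        rw [sub_nonneg]
        apply one_div_le_one_div_of_le hN1' (by linarith)
      calc (1 / N - 1 / (N - 1)) * S ≤ |(1 / N - 1 / (N - 1)) * S| := le_abs_self _
        _ = (1 / (N - 1) - 1 / N) * |S| := by
            rw [abs_mul, abs_of_nonpos (by linarith : 1 / N - 1 / (N - 1) ≤ 0)]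
            ring_nf
        _ ≤ (1 / (N - 1) - 1 / N) * ((N - 1) * B) := mul_le_mul_of_nonneg_left hScard hc
    nlinarith [h1, h2]
  have hfinal : 2 * lam * ‖Δ‖ ^ 2 ≤ 2 * B / N := by
    have heq : (1 / N) * B + (1 / (N - 1) - 1 / N) * ((N - 1) * B) = 2 * B / N := by
      field_simp
      ring
    linarith [key, hmid, heq.ge, heq.le]
  -- derive the norm bound
  have hnormbound : ‖Δ‖ ≤ 2 * Real.sqrt M * κ / (N * lam) := by
    rcases eq_or_lt_of_le (norm_nonneg Δ) with hz | hz
    · rw [← hz]; positivity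
    · rw [le_div_iff₀ (by positivity : (0:ℝ) < N * lam)]
      rw [le_div_iff₀ hN0] at hfinal
      have hx : N * lam * ‖Δ‖ ^ 2 ≤ B := by linarith
      apply le_of_mul_le_mul_right _ hz
      calc ‖Δ‖ * (N * lam) * ‖Δ‖ = N * lam * ‖Δ‖ ^ 2 := by ring
        _ ≤ B := hx
        _ = 2 * Real.sqrt M * κ * ‖Δ‖ := hBdef
  constructor
  · calc ‖φDi - φD‖ = ‖Δ‖ := rfl
      _ ≤ 2 * Real.sqrt M * κ / (N * lam) := hnormbound
      _ ≤ 2 * (N - 1) * Real.sqrt M * κ / (N * lam) := by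
          gcongr
          nlinarith [hsM, hκ0, hN1]
  · intro x₀ y₀ h1 h2
    have ha : |ev φD x₀ - y₀| ≤ Real.sqrt M := by
      have := Real.sqrt_le_sqrt h1
      rwa [Real.sqrt_sq_eq_abs] at this
    have hb : |ev φDi x₀ - y₀| ≤ Real.sqrt M := by
      have := Real.sqrt_le_sqrt h2
      rwa [Real.sqrt_sq_eq_abs] at this
    have hdd : |(ev φD x₀ - y₀) - (ev φDi x₀ - y₀)| ≤ κ * ‖Δ‖ := by
      have : (ev φD x₀ - y₀) - (ev φDi x₀ - y₀) = -(ev φDi x₀ - ev φD x₀) := by ring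
      rw [this, abs_neg]
      exact hevdiff x₀
    have h3 := sq_diff_bound _ _ _ _ ha hb hdd
    calc |(ev φD x₀ - y₀) ^ 2 - (ev φDi x₀ - y₀) ^ 2|
        ≤ 2 * Real.sqrt M * (κ * ‖Δ‖) := h3
      _ ≤ 2 * Real.sqrt M * (κ * (2 * Real.sqrt M * κ / (N * lam))) := by
          apply mul_le_mul_of_nonneg_left (mul_le_mul_of_nonneg_left hnormbound hκ0)
          positivity
      _ = 4 * (Real.sqrt M * Real.sqrt M) * κ ^ 2 / (N * lam) := by ring
      _ = 4 * M * κ ^ 2 / (N * lam) := by rw [Real.mul_self_sqrt hM.le]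
end

section
/- McDiarmid's bounded differences inequality: let X₁,…,Xₙ be independent random variables taking values in a set A, and let f: Aⁿ → ℝ satisfy, for each i, sup |f(x₁,…,xᵢ,…,xₙ) − f(x₁,…,xᵢ′,…,xₙ)| ≤ cᵢ over all choices of coordinates. Then for all ε > 0, P(f(X₁,…,Xₙ) − E f(X₁,…,Xₙ) ≥ ε) ≤ exp(−2ε²/Σᵢ cᵢ²). -/
/-!
Write `f(x) - 𝔼 f` on a product `A × B` as `(G a - 𝔼 G) + (f(a, y) - G a)` with
`G a = ∫ f(a, ·)`. The first term has oscillation at most the bounded difference in the first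
coordinate, so it is sub-Gaussian by Hoeffding's lemma; the second is, for each fixed `a`,
sub-Gaussian by induction on the number of coordinates. Integrating first in `y` and then in `a`
multiplies the two mgf bounds, so the variance proxies add up to `∑ cᵢ² / 4`, and the Chernoff
bound gives `exp (-2ε² / ∑ cᵢ²)`. Independence makes the law of `(X₁, …, Xₙ)` a product measure.
-/

open MeasureTheory Real ProbabilityTheory
open scoped NNReal

namespace ProbabilityTheory.HasSubgaussianMGF

lemma integrable_of_sub_const {Ω : Type*} [MeasurableSpace Ω] {μ : Measure Ω}
    [IsFiniteMeasure μ] {X : Ω → ℝ} {m : ℝ} {c : ℝ≥0}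
    (h : HasSubgaussianMGF (fun ω ↦ X ω - m) c μ) :
    Integrable X μ := by
  simpa [sub_eq_add_neg, integrable_add_const_iff] using h.integrable

variable {A B : Type*} [MeasurableSpace A] [MeasurableSpace B] {α : Measure A} {β : Measure B}
  [IsFiniteMeasure α] [IsFiniteMeasure β] {g : A × B → ℝ} {c₁ c₂ : ℝ≥0}

lemma prod (hg : Measurable g)
    (h₁ : HasSubgaussianMGF (fun a ↦ ∫ y, g (a, y) ∂β - ∫ a', ∫ y, g (a', y) ∂β ∂α) c₁ α)
    (h₂ : ∀ᵐ a ∂α, HasSubgaussianMGF (fun y ↦ g (a, y) - ∫ y', g (a, y') ∂β) c₂ β) :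
    HasSubgaussianMGF (fun z ↦ g z - ∫ z', g z' ∂(α.prod β)) (c₁ + c₂) (α.prod β) := by
  suffices h : HasSubgaussianMGF (fun z ↦ g z - ∫ a, ∫ y, g (a, y) ∂β ∂α) (c₁ + c₂)
      (α.prod β) by
    rwa [integral_prod g h.integrable_of_sub_const]
  set G : A → ℝ := fun a ↦ ∫ y, g (a, y) ∂β
  set m := ∫ a, G a ∂α
  have h_split (t : ℝ) (a : A) :
      ∫ y, exp (t * (g (a, y) - m)) ∂β
        = exp (t * (G a - m)) * mgf (fun y ↦ g (a, y) - G a) β t := by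
    rw [mgf, ← integral_const_mul]
    congr with y
    rw [← exp_add]
    ring_nf
  have h_inner_le (t : ℝ) : ∀ᵐ a ∂α,
      ∫ y, exp (t * (g (a, y) - m)) ∂β ≤ exp (t * (G a - m)) * exp (c₂ * t ^ 2 / 2) := by
    filter_upwards [h₂] with a ha
    rw [h_split]
    gcongr
    exact ha.mgf_le t
  have h_int (t : ℝ) : Integrable (fun z ↦ exp (t * (g z - m))) (α.prod β) := by
    have h_meas : AEStronglyMeasurable (fun z ↦ exp (t * (g z - m))) (α.prod β) := by
      fun_prop
    refine (integrable_prod_iff h_meas).2 ⟨?_, ?_⟩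
    · filter_upwards [h₂] with a ha
      refine ((ha.integrable_exp_mul t).const_mul (exp (t * (G a - m)))).congr ?_
      refine ae_of_all _ fun y ↦ ?_
      simp only [G, ← exp_add]
      ring_nf
    · refine ((h₁.integrable_exp_mul t).mul_const (exp (c₂ * t ^ 2 / 2))).mono'
        h_meas.norm.integral_prod_right' ?_
      filter_upwards [h_inner_le t] with a ha
      simp_rw [Real.norm_eq_abs, abs_exp]
      rwa [abs_of_nonneg (integral_nonneg fun _ ↦ (exp_pos _).le)]
  refine ⟨h_int, fun t ↦ ?_⟩
  calc mgf (fun z ↦ g z - m) (α.prod β) t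
      = ∫ a, ∫ y, exp (t * (g (a, y) - m)) ∂β ∂α := integral_prod _ (h_int t)
    _ ≤ ∫ a, exp (t * (G a - m)) * exp (c₂ * t ^ 2 / 2) ∂α :=
        integral_mono_ae (h_int t).integral_prod_left
          ((h₁.integrable_exp_mul t).mul_const _) (h_inner_le t)
    _ = mgf (fun a ↦ G a - m) α t * exp (c₂ * t ^ 2 / 2) := integral_mul_const _ _
    _ ≤ exp (c₁ * t ^ 2 / 2) * exp (c₂ * t ^ 2 / 2) := by
        gcongr
        exact h₁.mgf_le t
    _ = exp (↑(c₁ + c₂) * t ^ 2 / 2) := by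
        rw [← exp_add, NNReal.coe_add]
        ring_nf

end ProbabilityTheory.HasSubgaussianMGF

lemma ProbabilityTheory.hasSubgaussianMGF_of_forall_abs_sub_le {Ω : Type*} [MeasurableSpace Ω]
    {μ : Measure Ω} [IsProbabilityMeasure μ] {X : Ω → ℝ} (hX : AEMeasurable X μ) {c : ℝ}
    (hc : ∀ ω ω', |X ω - X ω'| ≤ c) :
    HasSubgaussianMGF (fun ω ↦ X ω - μ[X]) ((‖c‖₊ / 2) ^ 2) μ := by
  have h_mem (ω : Ω) : X ω ∈ Set.Icc (⨅ ω', X ω') ((⨅ ω', X ω') + c) := by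
    have : Nonempty Ω := ⟨ω⟩
    have h_bdd : BddBelow (Set.range X) :=
      ⟨X ω - c, by rintro _ ⟨ω', rfl⟩; linarith [(abs_le.1 (hc ω ω')).2]⟩
    refine ⟨ciInf_le h_bdd ω, ?_⟩
    have : X ω - c ≤ ⨅ ω', X ω' := le_ciInf fun ω' ↦ by linarith [(abs_le.1 (hc ω ω')).2]
    linarith
  simpa using hasSubgaussianMGF_of_mem_Icc hX (ae_of_all _ h_mem)

def HasBoundedDifferences {ι A : Type*} (f : (ι → A) → ℝ) (c : ι → ℝ) : Prop :=
  ∀ i x x', (∀ j, j ≠ i → x j = x' j) → |f x - f x'| ≤ c i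

namespace HasBoundedDifferences

section Cons

variable {A : Type*} {n : ℕ} {f : (Fin (n + 1) → A) → ℝ} {c : Fin (n + 1) → ℝ}

lemma comp_cons (hf : HasBoundedDifferences f c) (a : A) :
    HasBoundedDifferences (fun y ↦ f (Fin.cons a y)) (Fin.tail c) := by
  intro i y y' h
  refine hf i.succ _ _ fun j hj ↦ ?_
  cases j using Fin.cases with
  | zero => rfl
  | succ j => exact h j fun hji ↦ hj (hji ▸ rfl)

lemma abs_sub_cons_le (hf : HasBoundedDifferences f c) (a a' : A) (y : Fin n → A) :
    |f (Fin.cons a y) - f (Fin.cons a' y)| ≤ c 0 := by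
  refine hf 0 _ _ fun j hj ↦ ?_
  cases j using Fin.cases with
  | zero => exact absurd rfl hj
  | succ j => rfl

end Cons

theorem hasSubgaussianMGF_pi {A : Type*} [MeasurableSpace A] :
    ∀ {n : ℕ} (ν : Fin n → Measure A) [∀ i, IsProbabilityMeasure (ν i)]
      {f : (Fin n → A) → ℝ} {c : Fin n → ℝ}, Measurable f → HasBoundedDifferences f c →
      HasSubgaussianMGF (fun x ↦ f x - ∫ x', f x' ∂Measure.pi ν) (∑ i, (‖c i‖₊ / 2) ^ 2)
        (Measure.pi ν)
  | 0, ν, _, f, c, _, _ => by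
    have h_const (x : Fin 0 → A) : f x = f finZeroElim := congrArg f (Subsingleton.elim _ _)
    simp [h_const]
  | n + 1, ν, _, f, c, hf_meas, hf => by
    set g : A × (Fin n → A) → ℝ := fun z ↦ f (Fin.cons z.1 z.2)
    have hg_meas : Measurable g := by
      simpa [Function.comp_def, g, Fin.consEquiv] using
        hf_meas.comp (MeasurableEquiv.piFinSuccAbove (fun _ ↦ A) 0).symm.measurable
    have h_fiber (a : A) := hasSubgaussianMGF_pi (fun j ↦ ν j.succ) (f := fun y ↦ g (a, y))
      (hg_meas.comp measurable_prodMk_left) (hf.comp_cons a)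
    have h_first := hasSubgaussianMGF_of_forall_abs_sub_le (μ := ν 0)
      (X := fun a ↦ ∫ y, g (a, y) ∂Measure.pi fun j ↦ ν j.succ)
      hg_meas.stronglyMeasurable.integral_prod_right'.measurable.aemeasurable fun a a' ↦ by
        rw [← integral_sub (h_fiber a).integrable_of_sub_const
          (h_fiber a').integrable_of_sub_const]
        simpa using norm_integral_le_of_norm_le_const (f := fun y ↦ g (a, y) - g (a', y))
          (ae_of_all _ fun y ↦ hf.abs_sub_cons_le a a' y)
    have h_prod := h_first.prod hg_meas (ae_of_all _ h_fiber)
    have hmp := measurePreserving_piFinSuccAbove ν 0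
    simp only [Fin.succAbove_zero] at hmp
    rw [← hmp.integral_comp', ← hmp.map_eq] at h_prod
    simpa [Function.comp_def, g, Fin.tail, Fin.sum_univ_succ] using
      h_prod.of_map hmp.measurable.aemeasurable

theorem hasSubgaussianMGF_of_iIndepFun {Ω A : Type*} [MeasurableSpace Ω] [MeasurableSpace A]
    {μ : Measure Ω} {n : ℕ} {X : Fin n → Ω → A} (hX : ∀ i, AEMeasurable (X i) μ)
    (hindep : iIndepFun X μ) {f : (Fin n → A) → ℝ} {c : Fin n → ℝ} (hf_meas : Measurable f)
    (hf : HasBoundedDifferences f c) :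
    HasSubgaussianMGF (fun ω ↦ f (fun i ↦ X i ω) - ∫ ω', f (fun i ↦ X i ω') ∂μ)
      (∑ i, (‖c i‖₊ / 2) ^ 2) μ := by
  have := hindep.isProbabilityMeasure
  have (i : Fin n) : IsProbabilityMeasure (μ.map (X i)) := Measure.isProbabilityMeasure_map (hX i)
  have hX_vec : AEMeasurable (fun ω i ↦ X i ω) μ := aemeasurable_pi_lambda _ hX
  have h_pi := hasSubgaussianMGF_pi (fun i ↦ μ.map (X i)) hf_meas hf
  rw [← (iIndepFun_iff_map_fun_eq_pi_map hX).1 hindep,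
    integral_map hX_vec hf_meas.aestronglyMeasurable] at h_pi
  exact h_pi.of_map hX_vec

end HasBoundedDifferences

theorem stmt_6_general
    {Ω : Type*} [MeasurableSpace Ω] (μ : Measure Ω) [IsProbabilityMeasure μ]
    {A : Type*} [MeasurableSpace A]
    (n : ℕ)
    (X : Fin n → Ω → A)
    (hmeas : ∀ i, Measurable (X i))
    (hindep : ProbabilityTheory.iIndepFun X μ)
    (f : (Fin n → A) → ℝ) (hf : Measurable f)
    (c : Fin n → ℝ)
    (hdiff : ∀ (i : Fin n) (x x' : Fin n → A),
      (∀ j, j ≠ i → x j = x' j) → |f x - f x'| ≤ c i)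
    (ε : ℝ) (hε : 0 < ε) :
    μ {ω | ε ≤ f (fun i => X i ω) - ∫ ω', f (fun i => X i ω') ∂μ}
      ≤ ENNReal.ofReal (exp (-2 * ε ^ 2 / ∑ i, (c i) ^ 2)) := by
  have h := HasBoundedDifferences.hasSubgaussianMGF_of_iIndepFun
    (fun i ↦ (hmeas i).aemeasurable) hindep hf hdiff
  rw [ENNReal.le_ofReal_iff_toReal_le (measure_ne_top _ _) (exp_pos _).le]
  refine (h.measure_ge_le hε.le).trans_eq (congrArg exp ?_)
  push_cast
  simp only [Real.norm_eq_abs, div_pow, sq_abs, ← Finset.sum_div]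
  ring

/-- McDiarmid's bounded differences inequality: for independent `A`-valued random variables
`X₁,…,Xₙ` and `f : Aⁿ → ℝ` with bounded differences `cᵢ`,
`P(f(X) − E f(X) ≥ ε) ≤ exp(−2ε²/Σ cᵢ²)`. -/
theorem stmt_6
    {Ω : Type*} [MeasurableSpace Ω] (μ : Measure Ω) [IsProbabilityMeasure μ]
    {A : Type*} [MeasurableSpace A]
    (n : ℕ) (hn : 0 < n)
    (X : Fin n → Ω → A)
    (hmeas : ∀ i, Measurable (X i))
    (hindep : ProbabilityTheory.iIndepFun X μ)
    (f : (Fin n → A) → ℝ) (hf : Measurable f)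
    (c : Fin n → ℝ) (hc : ∀ i, 0 ≤ c i)
    (hdiff : ∀ (i : Fin n) (x x' : Fin n → A),
      (∀ j, j ≠ i → x j = x' j) → |f x - f x'| ≤ c i)
    (ε : ℝ) (hε : 0 < ε) :
    μ {ω | ε ≤ f (fun i => X i ω) - ∫ ω', f (fun i => X i ω') ∂μ}
      ≤ ENNReal.ofReal (exp (-2 * ε ^ 2 / ∑ i, (c i) ^ 2)) :=
  stmt_6_general μ n X hmeas hindep f hf c hdiff ε hε
end

section
/- Fix n points and k ≥ 1. In the k-nearest-neighbor setting with randomized tie-breaking (each point Xⱼ augmented with an independent Uniform[0,1] variable Zⱼ used to break ties), no augmented point (Xᵢ, Zᵢ) can be the nearest neighbor (under the randomized tie-breaking order) of more than γ_d + 2 of the remaining points, where γ_d is the maximum number of distinct points in ℝ^d that can share the same nearest neighbor; moreover γ_d ≤ 3^d − 1. -/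
/-!
Split the points `j` having `i` as nearest neighbour according to whether `X j = X i`. The points
`X j ≠ X i` are distinct and share the nearest neighbour `X i`, so there are at most `γ_d` of them.
For the points with `X j = X i` only the tie-breaking values matter, and on the line at most two
points, one on each side, share a nearest neighbour.

For `γ_d ≤ 3^d - 1`: if the points `p a` share the nearest neighbour `c`, the angle at `c` between
any two of them is at least `π / 3`, so the unit vectors in the directions `p a - c` are at mutual
distance at least `1`. Together with `0` they are `γ_d + 1` points of the closed unit ball whose
balls of radius `1 / 2` are disjoint and lie in the ball of radius `3 / 2`; comparing volumes
gives `γ_d + 1 ≤ 3^d`.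
-/

open Metric MeasureTheory Finset RealInnerProductSpace
open scoped ENNReal

theorem card_le_three_pow_of_separated {E : Type*} [NormedAddCommGroup E] [NormedSpace ℝ E]
    [FiniteDimensional ℝ E] (s : Finset E) (hs : ∀ x ∈ s, ‖x‖ ≤ 1)
    (h : (s : Set E).Pairwise fun x y => 1 ≤ ‖x - y‖) : #s ≤ 3 ^ Module.finrank ℝ E := by
  borelize E
  set μ : Measure E := Measure.addHaar
  have hdisj : (s : Set E).PairwiseDisjoint fun x => ball x (1 / 2) := by
    intro x hx y hy hxy
    refine ball_disjoint_ball ?_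
    rw [dist_eq_norm]
    linarith [h hx hy hxy]
  have hsub : (⋃ x ∈ s, ball x (1 / 2)) ⊆ ball (0 : E) (3 / 2) :=
    Set.iUnion₂_subset fun x hx => ball_subset_ball' (by
      rw [dist_zero_right]; linarith [hs x hx])
  have hvol : (#s : ℝ≥0∞) * ENNReal.ofReal ((1 / 2) ^ Module.finrank ℝ E) * μ (ball 0 1) ≤
      ENNReal.ofReal ((3 / 2) ^ Module.finrank ℝ E) * μ (ball 0 1) :=
    calc (#s : ℝ≥0∞) * ENNReal.ofReal ((1 / 2) ^ Module.finrank ℝ E) * μ (ball 0 1)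
        = μ (⋃ x ∈ s, ball x (1 / 2)) := by
          rw [measure_biUnion_finset hdisj fun _ _ => measurableSet_ball]
          simp only [μ.addHaar_ball_of_pos _ one_half_pos, sum_const, nsmul_eq_mul, mul_assoc]
      _ ≤ μ (ball 0 (3 / 2)) := measure_mono hsub
      _ = ENNReal.ofReal ((3 / 2) ^ Module.finrank ℝ E) * μ (ball 0 1) :=
          μ.addHaar_ball_of_pos _ (by norm_num)
  have hvol' := ENNReal.toReal_le_of_le_ofReal (by positivity)
    ((ENNReal.mul_le_mul_iff_left (measure_ball_pos μ _ one_pos).ne' measure_ball_lt_top.ne).1 hvol)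
  have : (#s : ℝ) ≤ 3 ^ Module.finrank ℝ E := by
    simpa [div_eq_mul_inv, mul_pow] using hvol'
  exact_mod_cast this

theorem card_add_one_le_three_pow_of_separated_of_norm_eq_one {E : Type*} [NormedAddCommGroup E]
    [NormedSpace ℝ E] [FiniteDimensional ℝ E] (s : Finset E) (hs : ∀ x ∈ s, ‖x‖ = 1)
    (h : (s : Set E).Pairwise fun x y => 1 ≤ ‖x - y‖) : #s + 1 ≤ 3 ^ Module.finrank ℝ E := by
  classical
  have h0 : (0 : E) ∉ s := fun h0 => by simpa using hs 0 h0
  rw [← card_insert_of_notMem h0]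
  refine card_le_three_pow_of_separated _ ?_ ?_
  · simp only [mem_insert, forall_eq_or_imp, norm_zero, zero_le_one, true_and]
    exact fun x hx => (hs x hx).le
  · rw [coe_insert, Set.pairwise_insert]
    refine ⟨h, fun x hx _ => ?_⟩
    simp [hs x hx]

section InnerProductSpace

variable {F : Type*} [NormedAddCommGroup F] [InnerProductSpace ℝ F]

theorem real_inner_le_half_norm_mul_norm_of_norm_le_norm_sub {u v : F} (huv : ‖u‖ ≤ ‖u - v‖)
    (hvu : ‖v‖ ≤ ‖v - u‖) : ⟪u, v⟫ ≤ ‖u‖ * ‖v‖ / 2 := by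
  have hu := norm_sub_sq_real u v
  have hv := norm_sub_sq_real v u
  rw [real_inner_comm] at hv
  rcases le_total ‖u‖ ‖v‖ with h | h
  · nlinarith [norm_nonneg u, pow_le_pow_left₀ (norm_nonneg v) hvu 2]
  · nlinarith [norm_nonneg v, pow_le_pow_left₀ (norm_nonneg u) huv 2]

theorem one_le_norm_sub_of_norm_le_norm_sub {u v : F} (hu : u ≠ 0) (hv : v ≠ 0)
    (huv : ‖u‖ ≤ ‖u - v‖) (hvu : ‖v‖ ≤ ‖v - u‖) :
    1 ≤ ‖‖u‖⁻¹ • u - ‖v‖⁻¹ • v‖ := by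
  have hinner : ⟪‖u‖⁻¹ • u, ‖v‖⁻¹ • v⟫ ≤ 1 / 2 := by
    rw [real_inner_smul_left, real_inner_smul_right, ← mul_assoc, ← mul_inv,
      inv_mul_le_iff₀ (mul_pos (norm_pos_iff.2 hu) (norm_pos_iff.2 hv))]
    linarith [real_inner_le_half_norm_mul_norm_of_norm_le_norm_sub huv hvu]
  have hu' : ‖‖u‖⁻¹ • u‖ = 1 := norm_smul_inv_norm hu
  have hv' : ‖‖v‖⁻¹ • v‖ = 1 := norm_smul_inv_norm hv
  have hsq : 1 ≤ ‖‖u‖⁻¹ • u - ‖v‖⁻¹ • v‖ ^ 2 := by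
    rw [norm_sub_sq_real, hu', hv']
    linarith
  nlinarith [norm_nonneg (‖u‖⁻¹ • u - ‖v‖⁻¹ • v)]

end InnerProductSpace

theorem not_lt_iff_lt_of_abs_sub_le {a x y : ℝ} (hx : x ≠ a) (hy : y ≠ a)
    (hxy : |x - a| ≤ |x - y|) (hyx : |y - a| ≤ |y - x|) : ¬(a < x ↔ a < y) := by
  grind [abs_of_neg, abs_of_nonneg]

/-- The configurations whose maximal size is `γ_d`. -/
def HasCommonNearestNeighbor {ι α : Type*} [MetricSpace α] (p : ι → α) (c : α) : Prop :=
  Function.Injective p ∧ (∀ a, p a ≠ c) ∧ ∀ a b, a ≠ b → dist (p a) c ≤ dist (p a) (p b)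

namespace HasCommonNearestNeighbor

variable {ι : Type*}

theorem of_dist_le {α : Type*} [MetricSpace α] {p : ι → α} {c : α} (hc : ∀ a, p a ≠ c)
    (h : ∀ a b, a ≠ b → dist (p a) c ≤ dist (p a) (p b)) : HasCommonNearestNeighbor p c := by
  refine ⟨fun a b hab => ?_, hc, h⟩
  by_contra hne
  exact hc b (dist_le_zero.1 (by simpa [hab] using h a b hne))

theorem exists_fin {α : Type*} [MetricSpace α] [Finite ι] {p : ι → α} {c : α}
    (h : HasCommonNearestNeighbor p c) :
    ∃ q : Fin (Nat.card ι) → α, HasCommonNearestNeighbor q c := by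
  set e := (Finite.equivFin ι).symm
  exact ⟨p ∘ e, h.1.comp e.injective, fun a => h.2.1 (e a),
    fun a b hab => h.2.2 (e a) (e b) (e.injective.ne hab)⟩

theorem card_add_one_le_three_pow {F : Type*} [NormedAddCommGroup F] [InnerProductSpace ℝ F]
    [FiniteDimensional ℝ F] [Fintype ι] {p : ι → F} {c : F} (h : HasCommonNearestNeighbor p c) :
    Fintype.card ι + 1 ≤ 3 ^ Module.finrank ℝ F := by
  classical
  set u : ι → F := fun a => ‖p a - c‖⁻¹ • (p a - c)
  have hsep : ∀ a b, a ≠ b → 1 ≤ ‖u a - u b‖ := fun a b hab =>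
    one_le_norm_sub_of_norm_le_norm_sub (sub_ne_zero.2 (h.2.1 a)) (sub_ne_zero.2 (h.2.1 b))
      (by simpa [dist_eq_norm] using h.2.2 a b hab)
      (by simpa [dist_eq_norm] using h.2.2 b a hab.symm)
  have hu : Function.Injective u := fun a b hab =>
    by_contra fun hne => (hsep a b hne).not_gt (by simp [hab])
  have := card_add_one_le_three_pow_of_separated_of_norm_eq_one (univ.image u) ?_ ?_
  · rwa [card_image_of_injective _ hu, card_univ] at this
  · simp only [mem_image, mem_univ, true_and, forall_exists_index, forall_apply_eq_imp_iff]
    exact fun a => norm_smul_inv_norm (sub_ne_zero.2 (h.2.1 a))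
  · simp only [coe_image, coe_univ, Set.image_univ]
    rintro _ ⟨a, rfl⟩ _ ⟨b, rfl⟩ hab
    exact hsep a b (ne_of_apply_ne u hab)

theorem card_le_two [Finite ι] {p : ι → ℝ} {c : ℝ} (h : HasCommonNearestNeighbor p c) :
    Nat.card ι ≤ 2 := by
  have hside : Function.Injective fun a => decide (c < p a) := fun a b hab => by
    by_contra hne
    refine not_lt_iff_lt_of_abs_sub_le (h.2.1 a) (h.2.1 b) ?_ ?_ (by simpa using hab)
    · simpa [Real.dist_eq] using h.2.2 a b hne
    · simpa [Real.dist_eq] using h.2.2 b a (Ne.symm hne)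
  simpa using Nat.card_le_card_of_injective _ hside

end HasCommonNearestNeighbor

theorem le_and_imp_le_of_lex {α β : Type*} [Preorder α] [Preorder β] {a b : α} {s t : β}
    {P : Prop} (h : a < b ∨ a = b ∧ s < t ∨ a = b ∧ s = t ∧ P) : a ≤ b ∧ (a = b → s ≤ t) := by
  rcases h with h | ⟨rfl, h⟩ | ⟨rfl, rfl, -⟩
  · exact ⟨h.le, fun hab => (h.ne hab).elim⟩
  · exact ⟨le_rfl, fun _ => h.le⟩
  · exact ⟨le_rfl, fun _ => le_rfl⟩

theorem ncard_setOf_nearestNeighbor_le {ι α : Type*} [LinearOrder ι] [Finite ι] [MetricSpace α]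
    (X : ι → α) (Z : ι → ℝ) (hZ : Function.Injective Z) {γ : ℕ}
    (hγ : ∀ m (p : Fin m → α) c, HasCommonNearestNeighbor p c → m ≤ γ) (i : ι) :
    {j | j ≠ i ∧ ∀ k, k ≠ j → k ≠ i →
        (dist (X i) (X j) < dist (X k) (X j) ∨
          (dist (X i) (X j) = dist (X k) (X j) ∧ |Z i - Z j| < |Z k - Z j|) ∨
          (dist (X i) (X j) = dist (X k) (X j) ∧ |Z i - Z j| = |Z k - Z j| ∧ i < k))}.ncard
      ≤ γ + 2 := by
  set S := {j | j ≠ i ∧ ∀ k, k ≠ j → k ≠ i →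
        (dist (X i) (X j) < dist (X k) (X j) ∨
          (dist (X i) (X j) = dist (X k) (X j) ∧ |Z i - Z j| < |Z k - Z j|) ∨
          (dist (X i) (X j) = dist (X k) (X j) ∧ |Z i - Z j| = |Z k - Z j| ∧ i < k))}
  have hS : ∀ j ∈ S, ∀ k ∈ S, k ≠ j → dist (X i) (X j) ≤ dist (X k) (X j) ∧
      (dist (X i) (X j) = dist (X k) (X j) → |Z i - Z j| ≤ |Z k - Z j|) :=
    fun j hj k hk hkj => le_and_imp_le_of_lex (hj.2 k hkj hk.1)
  have hfar : (S \ {j | X j = X i}).ncard ≤ γ := by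
    have hfarNN : HasCommonNearestNeighbor (fun j : ↥(S \ {j | X j = X i}) => X j) (X i) :=
      .of_dist_le (fun j => j.2.2) fun j k hjk => by
        simpa only [dist_comm (X j)] using
          (hS j j.2.1 k k.2.1 (Subtype.coe_ne_coe.2 hjk.symm)).1
    obtain ⟨q, hq⟩ := hfarNN.exists_fin
    exact hγ _ q _ hq
  have hnear : (S ∩ {j | X j = X i}).ncard ≤ 2 := by
    have hnearNN : HasCommonNearestNeighbor (fun j : ↥(S ∩ {j | X j = X i}) => Z j) (Z i) :=
      .of_dist_le (fun j h => j.2.1.1 (hZ h)) fun j k hjk => by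
        have hXj : X j = X i := j.2.2
        have hXk : X k = X i := k.2.2
        simpa only [Real.dist_eq, abs_sub_comm (Z j)] using
          (hS j j.2.1 k k.2.1 (Subtype.coe_ne_coe.2 hjk.symm)).2 (by rw [hXj, hXk])
    exact hnearNN.card_le_two
  rw [← Set.ncard_inter_add_ncard_sdiff_eq_ncard S {j | X j = X i}]
  omega

/-- Devroye–Wagner lemma with randomized tie-breaking: with `γ_d` the maximal number of
distinct points of `ℝ^d` sharing a common nearest neighbor, one has `γ_d ≤ 3^d − 1`, and
no augmented point `(Xᵢ, Zᵢ)` is the nearest neighbor — for the lexicographic tie-breaking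
order using the auxiliary values `Z` and the indices — of more than `γ_d + 2` of the
remaining points. -/
theorem stmt_17
    (d n : ℕ) (X : Fin n → EuclideanSpace ℝ (Fin d)) (Z : Fin n → ℝ)
    (hZ : Function.Injective Z)
    (γd : ℕ)
    (hγd : IsGreatest
      {m : ℕ | ∃ (p : Fin m → EuclideanSpace ℝ (Fin d)) (c : EuclideanSpace ℝ (Fin d)),
        Function.Injective p ∧ (∀ a, p a ≠ c) ∧
        ∀ a b : Fin m, a ≠ b → dist (p a) c ≤ dist (p a) (p b)} γd) :
    γd ≤ 3 ^ d - 1 ∧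
    ∀ i : Fin n,
      {j : Fin n | j ≠ i ∧ ∀ k : Fin n, k ≠ j → k ≠ i →
          (dist (X i) (X j) < dist (X k) (X j) ∨
            (dist (X i) (X j) = dist (X k) (X j) ∧ |Z i - Z j| < |Z k - Z j|) ∨
            (dist (X i) (X j) = dist (X k) (X j) ∧ |Z i - Z j| = |Z k - Z j| ∧ i < k))}.ncard
        ≤ γd + 2 := by
  obtain ⟨⟨p, c, hp⟩, hmax⟩ := hγd
  refine ⟨?_, ncard_setOf_nearestNeighbor_le X Z hZ fun m p c hp => hmax ⟨p, c, hp⟩⟩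
  have := HasCommonNearestNeighbor.card_add_one_le_three_pow hp
  rw [Fintype.card_fin, finrank_euclideanSpace_fin] at this
  omega
end
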